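/- Let Q be a symmetric bilinear form with the Hodge-Riemann property on a finite-dimensional real vector space V, and let β ∈ V satisfy Q(β, β) > 0. Then for α ∈ V, equality Q(α, α) · Q(β, β) = Q(α, β)² holds if and only if α is a scalar multiple of β. -/

import Mathlib

/-- A symmetric bilinear form `Q` on a finite-dimensional real vector space has the
*Hodge-Riemann property* if it is nondegenerate and has exactly one positive
eigenvalue, i.e. there is a vector `v` with `Q v v > 0` and a codimension-one
subspace on which `Q` is negative definite (signature `(+,−,…,−)`). -/
def HodgeRiemann {V : Type*} [AddCommGroup V] [Module ℝ V]
    (Q : V →ₗ[ℝ] V →ₗ[ℝ] ℝ) : Prop :=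
  (∀ v : V, (∀ w : V, Q v w = 0) → v = 0) ∧
    (∃ v : V, 0 < Q v v) ∧
    ∃ W : Submodule ℝ V, Module.finrank ℝ W + 1 = Module.finrank ℝ V ∧
      ∀ w ∈ W, w ≠ 0 → Q w w < 0

/-!
Write `α = c • β + γ` with `c = Q α β / Q β β`, so that `γ` is `Q`-orthogonal to `β` and
`Q α α * Q β β - (Q α β)² = Q β β * Q γ γ`. The `Q`-orthogonal complement of `β` is negative
definite: a nonzero `γ` in it with `Q γ γ ≥ 0` would span with `β` a plane on which `Q` is positive
semidefinite, and by a dimension count that plane meets the hyperplane on which `Q` is negative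
definite. Hence equality forces `γ = 0`.
-/

open Module Submodule

section

variable {K V : Type*} [Field K] [AddCommGroup V] [Module K V] (Q : V →ₗ[K] V →ₗ[K] K)

theorem linearIndependent_pair_of_apply_eq_zero {β γ : V} (hβ : Q β β ≠ 0)
    (hγβ : Q γ β = 0) (hγ : γ ≠ 0) : LinearIndependent K ![β, γ] := by
  rw [LinearIndependent.pair_iff]
  intro a b hab
  have ha : a = 0 := by
    simpa [hγβ, hβ] using congrArg (Q · β) hab
  subst ha
  exact ⟨rfl, (smul_eq_zero.mp (by simpa using hab)).resolve_right hγ⟩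

theorem apply_sub_div_smul_right_eq_zero {β : V} (hβ : Q β β ≠ 0) (α : V) :
    Q (α - (Q α β / Q β β) • β) β = 0 := by
  simp [hβ]

theorem mul_apply_self_sub_div_smul (hsymm : ∀ v v' : V, Q v v' = Q v' v) {β : V}
    (hβ : Q β β ≠ 0) (α : V) :
    Q β β * Q (α - (Q α β / Q β β) • β) (α - (Q α β / Q β β) • β) =
      Q α α * Q β β - Q α β ^ 2 := by
  simp only [map_sub, map_smul, LinearMap.sub_apply, LinearMap.smul_apply, smul_eq_mul,
    hsymm β α]
  field_simp
  ring

theorem finrank_le_one_of_apply_self_nonneg [LinearOrder K] [FiniteDimensional K V]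
    {W : Submodule K V} (hW : finrank K W + 1 = finrank K V) (hWneg : ∀ w ∈ W, w ≠ 0 → Q w w < 0)
    {U : Submodule K V} (hU : ∀ u ∈ U, 0 ≤ Q u u) : finrank K U ≤ 1 := by
  have hdisj : Disjoint W U := by
    rw [disjoint_def]
    intro w hwW hwU
    by_contra hw
    exact (hWneg w hwW hw).not_ge (hU w hwU)
  have := finrank_add_finrank_le_of_disjoint hdisj
  omega

theorem apply_self_nonneg_of_mem_span_pair [LinearOrder K] [IsStrictOrderedRing K] {β γ : V}
    (hβ : 0 ≤ Q β β) (hγ : 0 ≤ Q γ γ) (hβγ : Q β γ = 0) (hγβ : Q γ β = 0) : ∀ u ∈ span K {β, γ}, 0 ≤ Q u u := by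
  intro u hu
  obtain ⟨a, b, rfl⟩ := mem_span_pair.mp hu
  have hexpand : Q (a • β + b • γ) (a • β + b • γ) = a ^ 2 * Q β β + b ^ 2 * Q γ γ := by
    simp only [map_add, map_smul, LinearMap.add_apply, LinearMap.smul_apply, smul_eq_mul,
      hβγ, hγβ]
    ring
  rw [hexpand]
  positivity

theorem apply_self_neg_of_apply_eq_zero [LinearOrder K] [IsStrictOrderedRing K]
    [FiniteDimensional K V] {W : Submodule K V}
    (hW : finrank K W + 1 = finrank K V) (hWneg : ∀ w ∈ W, w ≠ 0 → Q w w < 0)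
    {β γ : V} (hβ : 0 < Q β β) (hβγ : Q β γ = 0) (hγβ : Q γ β = 0) (hγ : γ ≠ 0) :
    Q γ γ < 0 := by
  by_contra! hγγ
  have hplane : finrank K (span K {β, γ}) = 2 := by
    rw [← Matrix.range_cons_cons_empty β γ ![],
      finrank_span_eq_card (linearIndependent_pair_of_apply_eq_zero Q hβ.ne' hγβ hγ)]
    rfl
  have := finrank_le_one_of_apply_self_nonneg Q hW hWneg
    (apply_self_nonneg_of_mem_span_pair Q hβ.le hγγ hβγ hγβ)
  omega

end

/-- for a symmetric bilinear form `Q` with the Hodge-Riemann property and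
`β` with `Q β β > 0`, equality `Q α α * Q β β = (Q α β)²` holds if and only if `α` is a
scalar multiple of `β`. -/
theorem hodge_index_equality_iff
    {V : Type*} [AddCommGroup V] [Module ℝ V] [FiniteDimensional ℝ V]
    (Q : V →ₗ[ℝ] V →ₗ[ℝ] ℝ) (hsymm : ∀ v v' : V, Q v v' = Q v' v)
    (hQ : HodgeRiemann Q) (β : V) (hβ : 0 < Q β β) (α : V) :
    Q α α * Q β β = (Q α β) ^ 2 ↔ ∃ c : ℝ, α = c • β := by
  obtain ⟨-, -, W, hW, hWneg⟩ := hQ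
  constructor
  · intro heq
    set γ := α - (Q α β / Q β β) • β
    have hγβ : Q γ β = 0 := apply_sub_div_smul_right_eq_zero Q hβ.ne' α
    have hγγ : Q γ γ = 0 := by
      have := mul_apply_self_sub_div_smul Q hsymm hβ.ne' α
      rw [heq, sub_self] at this
      exact (mul_eq_zero.mp this).resolve_left hβ.ne'
    refine ⟨Q α β / Q β β, sub_eq_zero.mp ?_⟩
    by_contra hγ
    exact (apply_self_neg_of_apply_eq_zero Q hW hWneg hβ (by rw [hsymm, hγβ]) hγβ hγ).ne hγγ
  · rintro ⟨c, rfl⟩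
    simp only [map_smul, LinearMap.smul_apply, smul_eq_mul]
    ring
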